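/- Let d be an odd prime and 0 ≤ λ ≤ 1/(d+1). Then the isotropic state ρ = λ P_+ + ((1−λ)/d²) I_{d²}, where P_+ = (1/d) Σ_{m,n ∈ Z_d} |mm⟩⟨nn| is the projection onto the maximally entangled state, is separable. -/

import Mathlib

open Matrix Kronecker
open scoped ComplexOrder

/-- A bipartite density on `C^d ⊗ C^d` is separable if it is a finite convex
combination of Kronecker products of `d×d` densities. -/
def IsSeparableState {d : ℕ} [NeZero d]
    (ρ : Matrix (ZMod d × ZMod d) (ZMod d × ZMod d) ℂ) : Prop :=
  ∃ (n : ℕ) (w : Fin n → ℝ) (σ τ : Fin n → Matrix (ZMod d) (ZMod d) ℂ),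
    (∀ i, 0 ≤ w i) ∧ (∑ i, w i = 1) ∧
    (∀ i, (σ i).PosSemidef ∧ (σ i).trace = 1) ∧
    (∀ i, (τ i).PosSemidef ∧ (τ i).trace = 1) ∧
    ρ = ∑ i, (w i : ℂ) • (σ i ⊗ₖ τ i)

/-!
The d² rank-one projectors `chirpProj b k` onto the normalised quadratic chirps
`m ↦ e(b m² + k m)`, tensored with their complex conjugates `chirpProj (-b) (-k)`, sum by
orthogonality of additive characters to the matrix whose `((a, α), (c, γ))` entry is `1`
exactly when `a + γ = c + α` and `a² + γ² = c² + α²`. As `2` is invertible mod `d`, this forces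
`{a, γ} = {c, α}`, so the sum is `1 + d P₊ - ∑ₘ |mm⟩⟨mm|`. Hence
`ρ = (λ/d) ∑ chirpProj b k ⊗ chirpProj (-b) (-k) + (λ/d) ∑ₘ |m⟩⟨m| ⊗ |m⟩⟨m| + (1 - λ(d+1)) I/d²`,
and all three coefficients are nonnegative because `λ ≤ 1/(d+1)`.
-/

def IsDensity {n : Type*} [Fintype n] (A : Matrix n n ℂ) : Prop := A.PosSemidef ∧ A.trace = 1

def productDensities (n m : Type*) [Fintype n] [Fintype m] : Set (Matrix (n × m) (n × m) ℂ) :=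
  {x | ∃ σ τ, IsDensity σ ∧ IsDensity τ ∧ σ ⊗ₖ τ = x}

lemma kronecker_mem_hull {n m : Type*} [Fintype n] [Fintype m] {σ : Matrix n n ℂ}
    {τ : Matrix m m ℂ} (hσ : IsDensity σ) (hτ : IsDensity τ) :
    σ ⊗ₖ τ ∈ PointedCone.hull ℝ (productDensities n m) :=
  PointedCone.subset_hull ⟨σ, τ, hσ, hτ, rfl⟩

lemma isSeparableState_of_mem_hull {d : ℕ} [NeZero d]
    {ρ : Matrix (ZMod d × ZMod d) (ZMod d × ZMod d) ℂ}
    (hρ : ρ ∈ PointedCone.hull ℝ (productDensities (ZMod d) (ZMod d))) (htr : ρ.trace = 1) :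
    IsSeparableState ρ := by
  obtain ⟨n, w, g, rfl⟩ := Submodule.mem_span_set'.mp hρ
  choose σ τ hσ hτ hg using fun i => (g i).2
  have hsum : ∑ i, w i • (g i : Matrix _ _ ℂ) = ∑ i, ((w i : ℝ) : ℂ) • (σ i ⊗ₖ τ i) := by
    simp only [← Nonneg.coe_smul, hg, Complex.coe_smul]
  refine ⟨n, fun i => w i, σ, τ, fun i => (w i).2, ?_, hσ, hτ, hsum⟩
  rw [hsum] at htr
  have hw : ∑ i, ((w i : ℝ) : ℂ) = 1 := by
    simpa only [trace_sum, trace_smul, trace_kronecker, (hσ _).2, (hτ _).2, mul_one,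
      smul_eq_mul] using htr
  exact_mod_cast hw

lemma isDensity_single {n : Type*} [Fintype n] [DecidableEq n] (i : n) :
    IsDensity (single i i (1 : ℂ)) := by
  refine ⟨?_, trace_single_eq_same i 1⟩
  simpa [single_eq_single_vecMulVec_single, Pi.single_star]
    using posSemidef_vecMulVec_self_star (Pi.single i (1 : ℂ))

noncomputable def maximallyMixed (n : Type*) [Fintype n] [DecidableEq n] : Matrix n n ℂ :=
  (Fintype.card n : ℝ)⁻¹ • 1

lemma isDensity_maximallyMixed (n : Type*) [Fintype n] [DecidableEq n] [Nonempty n] :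
    IsDensity (maximallyMixed n) := by
  refine ⟨PosSemidef.one.smul (by positivity), ?_⟩
  simp [maximallyMixed, trace_one, Fintype.card_ne_zero]

lemma trace_single_one {n : Type*} [Fintype n] [DecidableEq n] (i j : n) :
    trace (single i j (1 : ℂ)) = if i = j then 1 else 0 := by
  split_ifs with h
  · exact h ▸ trace_single_eq_same i 1
  · exact trace_single_eq_of_ne i j 1 h

lemma add_eq_add_and_sq_add_sq_eq_iff {R : Type*} [CommRing R] [IsDomain R] (h2 : (2 : R) ≠ 0)
    {a b c e : R} :
    a ^ 2 + b ^ 2 = c ^ 2 + e ^ 2 ∧ a + b = c + e ↔ (a = c ∧ b = e) ∨ (a = e ∧ b = c) := by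
  constructor
  · rintro ⟨hsq, hsum⟩
    obtain rfl : b = c + e - a := by linear_combination hsum
    have hprod : 2 * ((a - c) * (a - e)) = 0 := by linear_combination hsq
    rcases mul_eq_zero.mp ((mul_eq_zero.mp hprod).resolve_left h2) with h | h
    · exact .inl ⟨by linear_combination h, by linear_combination -h⟩
    · exact .inr ⟨by linear_combination h, by linear_combination -h⟩
  · rintro (⟨rfl, rfl⟩ | ⟨rfl, rfl⟩) <;> constructor <;> ring

noncomputable def isotropicState (d : ℕ) [NeZero d] (lam : ℝ) :
    Matrix (ZMod d × ZMod d) (ZMod d × ZMod d) ℂ :=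
  (lam : ℂ) • ((d : ℂ)⁻¹ • ∑ m : ZMod d, ∑ n : ZMod d, single (m, m) (n, n) (1 : ℂ))
    + (((1 - lam) / (d : ℝ) ^ 2 : ℝ) : ℂ) • 1

lemma trace_isotropicState (d : ℕ) [NeZero d] (lam : ℝ) : (isotropicState d lam).trace = 1 := by
  have hd0 : (d : ℂ) ≠ 0 := NeZero.ne _
  simp [isotropicState, trace_sum, trace_single_one]
  field_simp
  ring

open ZMod

section Chirp

variable {d : ℕ} [NeZero d]

lemma sum_sum_stdAddChar_mul_add_mul (s t : ZMod d) :
    ∑ b : ZMod d, ∑ k : ZMod d, stdAddChar (b * s + k * t) =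
      if s = 0 ∧ t = 0 then (d : ℂ) ^ 2 else 0 := by
  simp only [AddChar.map_add_eq_mul, ← Finset.mul_sum, ← Finset.sum_mul,
    AddChar.sum_mulShift _ (isPrimitive_stdAddChar d), ZMod.card]
  by_cases hs : s = 0 <;> by_cases ht : t = 0 <;> simp [hs, ht, sq]

noncomputable def chirp (b k m : ZMod d) : ℂ := stdAddChar (b * m ^ 2 + k * m)

noncomputable def chirpProj (b k : ZMod d) : Matrix (ZMod d) (ZMod d) ℂ :=
  (d : ℝ)⁻¹ • vecMulVec (chirp b k) (star (chirp b k))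

lemma chirpProj_apply (b k m n : ZMod d) :
    chirpProj b k m n = (d : ℂ)⁻¹ * stdAddChar (b * (m ^ 2 - n ^ 2) + k * (m - n)) := by
  rw [chirpProj, Matrix.smul_apply, vecMulVec_apply, Pi.star_apply, chirp, chirp, Complex.star_def,
    ← AddChar.map_neg_eq_conj, ← AddChar.map_add_eq_mul, Complex.real_smul]
  push_cast
  ring_nf

lemma isDensity_chirpProj (b k : ZMod d) : IsDensity (chirpProj b k) := by
  refine ⟨(posSemidef_vecMulVec_self_star _).smul (by positivity), ?_⟩
  simp [chirpProj_apply, Matrix.trace, ZMod.card, NeZero.ne]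

lemma chirpProj_kronecker_apply (b k a α c γ : ZMod d) :
    (chirpProj b k ⊗ₖ chirpProj (-b) (-k)) (a, α) (c, γ) =
      (d : ℂ)⁻¹ ^ 2 *
        stdAddChar (b * (a ^ 2 + γ ^ 2 - (c ^ 2 + α ^ 2)) + k * (a + γ - (c + α))) := by
  rw [kroneckerMap_apply, chirpProj_apply, chirpProj_apply, mul_mul_mul_comm,
    ← AddChar.map_add_eq_mul, ← sq]
  congr 2
  ring

lemma sum_chirpProj_kronecker [Fact d.Prime] (hd2 : d ≠ 2) :
    ∑ b : ZMod d, ∑ k : ZMod d, chirpProj b k ⊗ₖ chirpProj (-b) (-k) =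
      1 + ∑ m : ZMod d, ∑ n : ZMod d, single (m, m) (n, n) 1
        - ∑ m : ZMod d, single (m, m) (m, m) 1 := by
  have h2 : (2 : ZMod d) ≠ 0 := Ring.two_ne_zero (by rwa [ZMod.ringChar_zmod_n])
  ext ⟨a, α⟩ ⟨c, γ⟩
  simp only [Matrix.sum_apply, chirpProj_kronecker_apply, ← Finset.mul_sum,
    sum_sum_stdAddChar_mul_add_mul, sub_eq_zero, add_eq_add_and_sq_add_sq_eq_iff h2,
    Matrix.sub_apply, Matrix.add_apply, one_apply, single_apply, Prod.mk.injEq, ite_and,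
    Finset.sum_ite_irrel, Finset.sum_const_zero, Finset.sum_ite_eq']
  -- inclusion–exclusion: the two solution families overlap exactly where `a = c = α = γ`
  split_ifs <;> simp_all [eq_comm]

lemma isotropicState_eq [Fact d.Prime] (hd2 : d ≠ 2) (lam : ℝ) :
    isotropicState d lam =
      (lam / d) • ∑ b : ZMod d, ∑ k : ZMod d, chirpProj b k ⊗ₖ chirpProj (-b) (-k)
        + (lam / d) • ∑ m : ZMod d, single m m (1 : ℂ) ⊗ₖ single m m 1
        + (1 - lam * (d + 1)) • (maximallyMixed (ZMod d) ⊗ₖ maximallyMixed (ZMod d)) := by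
  rw [sum_chirpProj_kronecker hd2]
  simp only [isotropicState, maximallyMixed, single_kronecker_single, mul_one, ZMod.card,
    smul_kronecker, kronecker_smul, one_kronecker_one, smul_smul]
  match_scalars <;> simp only [Complex.coe_algebraMap] <;> field_simp <;> ring

lemma isotropicState_mem_hull [Fact d.Prime] (hd2 : d ≠ 2) {lam : ℝ} (h0 : 0 ≤ lam)
    (h1 : lam ≤ 1 / ((d : ℝ) + 1)) :
    isotropicState d lam ∈ PointedCone.hull ℝ (productDensities (ZMod d) (ZMod d)) := by
  have hlam : 0 ≤ 1 - lam * (d + 1) := by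
    have := (le_div_iff₀ (by positivity)).mp h1
    linarith
  rw [isotropicState_eq hd2]
  refine add_mem (add_mem ?_ ?_) ?_ <;> refine PointedCone.smul_mem _ (by positivity) ?_
  · exact sum_mem fun b _ => sum_mem fun k _ =>
      kronecker_mem_hull (isDensity_chirpProj b k) (isDensity_chirpProj _ _)
  · exact sum_mem fun m _ => kronecker_mem_hull (isDensity_single m) (isDensity_single m)
  · exact kronecker_mem_hull (isDensity_maximallyMixed _) (isDensity_maximallyMixed _)

end Chirp

/-- For `d` an odd prime and `0 ≤ λ ≤ 1/(d+1)`, the isotropic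
state `ρ = λ P_+ + ((1−λ)/d²) I_{d²}` with
`P_+ = (1/d) Σ_{m,n} |mm⟩⟨nn|` is separable. -/
theorem isotropic_separable (d : ℕ) [NeZero d] (hd : d.Prime) (hodd : Odd d)
    (lam : ℝ) (h0 : 0 ≤ lam) (h1 : lam ≤ 1 / ((d : ℝ) + 1))
    (ρ : Matrix (ZMod d × ZMod d) (ZMod d × ZMod d) ℂ)
    (hρ : ρ = (lam : ℂ) •
          ((d : ℂ)⁻¹ • ∑ m : ZMod d, ∑ n : ZMod d, Matrix.single (m, m) (n, n) (1 : ℂ))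
        + (((1 - lam) / (d : ℝ) ^ 2 : ℝ) : ℂ) • (1 : Matrix (ZMod d × ZMod d) (ZMod d × ZMod d) ℂ)) :
    IsSeparableState ρ := by
  have := Fact.mk hd
  rw [show ρ = isotropicState d lam from hρ]
  exact isSeparableState_of_mem_hull
    (isotropicState_mem_hull (hodd.ne_two_of_dvd_nat dvd_rfl) h0 h1) (trace_isotropicState d lam)
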